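/- Let X be a metric space, h : X → X a bijection whose inverse h⁻¹ is Hölder continuous with constant A > 0 and exponent B > 0 (i.e. dist(h⁻¹ x, h⁻¹ y) ≤ A · dist(x,y)^B for all x, y). Let f, g : X → X satisfy h ∘ f = g ∘ h. Suppose points c₁, c₂ ∈ X satisfy dist(fⁿ(c₁), c₂) ≥ C · exp(-α·n) for all n ≥ 1, with C > 0, α > 0. Then there exist C' > 0 and α' > 0 such that dist(gⁿ(h c₁), h c₂) ≥ C' · exp(-α'·n) for all n ≥ 1. -/
import Mathlib


theorem stmt_5 {X : Type*} [MetricSpace X] (h : X ≃ X) (f g : X → X)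
    (A B : ℝ) (hA : 0 < A) (hB : 0 < B)
    (hHolder : ∀ x y : X, dist (h.symm x) (h.symm y) ≤ A * dist x y ^ B)
    (hconj : ∀ x : X, h (f x) = g (h x))
    (c₁ c₂ : X) (C a : ℝ) (hC : 0 < C) (ha : 0 < a)
    (hSR : ∀ n : ℕ, 1 ≤ n → dist (f^[n] c₁) c₂ ≥ C * Real.exp (-a * n)) :
    ∃ C' > (0 : ℝ), ∃ a' > (0 : ℝ), ∀ n : ℕ, 1 ≤ n →
      dist (g^[n] (h c₁)) (h c₂) ≥ C' * Real.exp (-a' * n) := by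
  refine ⟨(C / A) ^ (1 / B), Real.rpow_pos_of_pos (div_pos hC hA) _, a / B,
    div_pos ha hB, fun n hn => ?_⟩
  have hiter : ∀ m : ℕ, h (f^[m] c₁) = g^[m] (h c₁) := by
    intro m
    induction m with
    | zero => simp
    | succ k ih =>
      rw [Function.iterate_succ_apply', Function.iterate_succ_apply', hconj, ih]
  have key : dist (f^[n] c₁) c₂ ≤ A * dist (g^[n] (h c₁)) (h c₂) ^ B := by
    have := hHolder (g^[n] (h c₁)) (h c₂)
    simpa [← hiter n] using this
  have h1 : C * Real.exp (-a * n) ≤ A * dist (g^[n] (h c₁)) (h c₂) ^ B :=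
    le_trans (hSR n hn) key
  set d := dist (g^[n] (h c₁)) (h c₂) with hd
  have h2 : C / A * Real.exp (-a * n) ≤ d ^ B := by
    rw [div_mul_eq_mul_div, div_le_iff₀ hA]
    linarith [h1]
  have h3 : (C / A * Real.exp (-a * n)) ^ (1 / B) ≤ (d ^ B) ^ (1 / B) :=
    Real.rpow_le_rpow (by positivity) h2 (by positivity)
  have hr : (d ^ B) ^ (1 / B) = d := by
    rw [← Real.rpow_mul dist_nonneg, mul_one_div, div_self (ne_of_gt hB),
      Real.rpow_one]
  have hl : (C / A * Real.exp (-a * n)) ^ (1 / B)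
      = (C / A) ^ (1 / B) * Real.exp (-(a / B) * n) := by
    rw [Real.mul_rpow (by positivity) (Real.exp_nonneg _), ← Real.exp_mul]
    ring_nf
  rw [hr, hl] at h3
  exact h3
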